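/- Any Euler field E on the 2-dimensional F-manifold germ N₂, given by (ℂ²,0) with coordinates (t₁,t₂), e = ∂₁ and ∂₂∘∂₂ = 0, has the form E = (t₁ + c₁)∂₁ + g(t₂)∂₂ for some c₁ ∈ ℂ and some g(t₂) ∈ ℂ{t₂}. -/

import Mathlib

/-!
Testing `Lie_E(∘) = ∘` on the constant fields `∂₁ = e` and `∂₂` (where `∂₂ ∘ ∂₂ = 0`) gives
`∂₁E = e` and `∂₂E¹ = 0`. On a polydisc around `0`, a holomorphic function with a vanishing partial
derivative does not depend on that coordinate. Hence `E¹ - t₁` is constant and `E²` depends on `t₂`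
alone, and `g(t₂) = E²(0, t₂)` is a holomorphic function of one variable, hence analytic.
-/

open Matrix

noncomputable section

/-- The multiplication of the F-manifold `N₂`: `∂₁` is the unit and `∂₂∘∂₂ = 0`,
extended function-bilinearly to vector fields on `ℂ²`. -/
def vmulN2 (X Y : (Fin 2 → ℂ) → (Fin 2 → ℂ)) : (Fin 2 → ℂ) → Fin 2 → ℂ :=
  fun t => ![X t 0 * Y t 0, X t 0 * Y t 1 + X t 1 * Y t 0]

/-- The Lie bracket of vector fields on `ℂ²`. -/
def vbracket (X Y : (Fin 2 → ℂ) → (Fin 2 → ℂ)) : (Fin 2 → ℂ) → Fin 2 → ℂ :=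
  fun t i => ∑ j : Fin 2,
    (X t j * fderiv ℂ (fun s => Y s i) t (Pi.single j 1)
      - Y t j * fderiv ℂ (fun s => X s i) t (Pi.single j 1))

open Metric Function

@[simp]
theorem vmulN2_apply_zero (X Y : (Fin 2 → ℂ) → (Fin 2 → ℂ)) (t : Fin 2 → ℂ) :
    vmulN2 X Y t 0 = X t 0 * Y t 0 := rfl

@[simp]
theorem vmulN2_apply_one (X Y : (Fin 2 → ℂ) → (Fin 2 → ℂ)) (t : Fin 2 → ℂ) :
    vmulN2 X Y t 1 = X t 0 * Y t 1 + X t 1 * Y t 0 := rfl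

theorem update_mem_ball {ι : Type*} [Fintype ι] [DecidableEq ι] {X : ι → Type*}
    [∀ i, PseudoMetricSpace (X i)] {c x : ∀ i, X i} {r : ℝ} (hx : x ∈ ball c r) {i : ι}
    {z : X i} (hz : z ∈ ball (c i) r) : update x i z ∈ ball c r := by
  have hr : 0 < r := pos_of_mem_ball hx
  rw [ball_pi c hr] at hx ⊢
  exact (Set.update_mem_pi_iff_of_mem hx).2 fun _ => hz

theorem apply_update_eq_of_fderiv_single_eq_zero {𝕜 ι F : Type*} [RCLike 𝕜] [Fintype ι]
    [DecidableEq ι] [NormedAddCommGroup F] [NormedSpace 𝕜 F] {f : (ι → 𝕜) → F} {c : ι → 𝕜}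
    {r : ℝ} (hf : DifferentiableOn 𝕜 f (ball c r)) (i : ι)
    (hfi : ∀ x ∈ ball c r, fderiv 𝕜 f x (Pi.single i 1) = 0) {x : ι → 𝕜} (hx : x ∈ ball c r) :
    f (update x i (c i)) = f x := by
  have hr : 0 < r := pos_of_mem_ball hx
  have hderiv : ∀ z ∈ ball (c i) r, HasDerivAt (fun z => f (update x i z)) 0 z := by
    intro z hz
    have hxz := update_mem_ball hx hz
    have hcomp := ((hf _ hxz).differentiableAt (isOpen_ball.mem_nhds hxz)).hasFDerivAt
      |>.comp_hasDerivAt z (hasDerivAt_update x i z)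
    rw [hfi _ hxz] at hcomp
    exact hcomp
  have hxi : x i ∈ ball (c i) r := by simpa using (dist_pi_lt_iff hr).1 hx i
  calc f (update x i (c i)) = f (update x i (x i)) :=
        isOpen_ball.is_const_of_deriv_eq_zero (convex_ball _ _).isPreconnected
          (fun z hz => (hderiv z hz).differentiableAt.differentiableWithinAt)
          (fun z hz => (hderiv z hz).deriv) (mem_ball_self hr) hxi
    _ = f x := by rw [update_eq_self]

theorem vbracket_const (X : (Fin 2 → ℂ) → (Fin 2 → ℂ)) (v t : Fin 2 → ℂ) (i : Fin 2) :
    vbracket X (fun _ => v) t i = -fderiv ℂ (fun s => X s i) t v := by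
  have hv : v = v 0 • Pi.single 0 1 + v 1 • Pi.single 1 1 := by
    ext j; fin_cases j <;> simp
  conv_rhs => rw [hv]
  simp [vbracket, Fin.sum_univ_two]

def IsEulerFieldN2 (U : Set (Fin 2 → ℂ)) (E : (Fin 2 → ℂ) → (Fin 2 → ℂ)) : Prop :=
  ∀ X Y : (Fin 2 → ℂ) → (Fin 2 → ℂ),
    (∀ i, DifferentiableOn ℂ (fun t => X t i) U) →
    (∀ i, DifferentiableOn ℂ (fun t => Y t i) U) →
    ∀ t ∈ U, vbracket E (vmulN2 X Y) t - vmulN2 (vbracket E X) Y t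
      - vmulN2 X (vbracket E Y) t = vmulN2 X Y t

namespace IsEulerFieldN2

variable {U : Set (Fin 2 → ℂ)} {E : (Fin 2 → ℂ) → (Fin 2 → ℂ)} {t : Fin 2 → ℂ}

theorem const_fields (h : IsEulerFieldN2 U E) (v w : Fin 2 → ℂ) (ht : t ∈ U) :
    vbracket E (vmulN2 (fun _ => v) fun _ => w) t - vmulN2 (vbracket E fun _ => v) (fun _ => w) t
      - vmulN2 (fun _ => v) (vbracket E fun _ => w) t = vmulN2 (fun _ => v) (fun _ => w) t :=
  h _ _ (fun i => differentiableOn_const (v i)) (fun i => differentiableOn_const (w i)) t ht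

theorem fderiv_unit (h : IsEulerFieldN2 U E) (ht : t ∈ U) (i : Fin 2) :
    fderiv ℂ (fun s => E s i) t (Pi.single 0 1) = (Pi.single 0 1 : Fin 2 → ℂ) i := by
  have hee : vmulN2 (fun _ => Pi.single 0 1) (fun _ => Pi.single 0 1) = fun _ => Pi.single 0 1 := by
    funext s j; fin_cases j <;> simp
  have key := congrFun (h.const_fields (Pi.single 0 1) (Pi.single 0 1) ht) i
  rw [hee] at key
  fin_cases i <;> simp [vbracket_const] at key ⊢ <;> linear_combination key

theorem fderiv_fst_single_one_eq_zero (h : IsEulerFieldN2 U E) (ht : t ∈ U) :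
    fderiv ℂ (fun s => E s 0) t (Pi.single 1 1) = 0 := by
  have hnil : vmulN2 (fun _ => Pi.single 1 1) (fun _ => Pi.single 1 1) = fun _ => 0 := by
    funext s j; fin_cases j <;> simp
  have key := congrFun (h.const_fields (Pi.single 1 1) (Pi.single 1 1) ht) 1
  rw [hnil] at key
  simpa [vbracket_const] using key

theorem fst_sub_apply_eq {c : Fin 2 → ℂ} {r : ℝ} (h : IsEulerFieldN2 U E)
    (hE : DifferentiableOn ℂ (fun s => E s 0) (ball c r)) (hball : ball c r ⊆ U)
    (ht : t ∈ ball c r) : E t 0 - t 0 = E c 0 - c 0 := by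
  have hG : DifferentiableOn ℂ (fun s => E s 0 - s 0) (ball c r) :=
    hE.sub fun s _ => (differentiableAt_apply 0 s).differentiableWithinAt
  have hGderiv : ∀ j, ∀ x ∈ ball c r, fderiv ℂ (fun s => E s 0 - s 0) x (Pi.single j 1) = 0 := by
    intro j x hx
    have hEx := (hE x hx).differentiableAt (isOpen_ball.mem_nhds hx)
    rw [(hEx.hasFDerivAt.fun_sub (hasFDerivAt_apply 0 x)).fderiv]
    fin_cases j
    · simp [h.fderiv_unit (hball hx)]
    · simp [h.fderiv_fst_single_one_eq_zero (hball hx)]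
  have hcorner : update (update t 1 (c 1)) 0 (c 0) = c := by
    ext j; fin_cases j <;> simp
  have ht' : update t 1 (c 1) ∈ ball c r :=
    update_mem_ball ht (mem_ball_self (pos_of_mem_ball ht))
  calc E t 0 - t 0 = E (update t 1 (c 1)) 0 - update t 1 (c 1) 0 :=
        (apply_update_eq_of_fderiv_single_eq_zero hG 1 (hGderiv 1) ht).symm
    _ = E c 0 - c 0 := by
        rw [← apply_update_eq_of_fderiv_single_eq_zero hG 0 (hGderiv 0) ht', hcorner]

end IsEulerFieldN2

theorem statement11_general (U : Set (Fin 2 → ℂ)) (hU : IsOpen U)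
    (h0 : (0 : Fin 2 → ℂ) ∈ U)
    (Efld : (Fin 2 → ℂ) → (Fin 2 → ℂ))
    (hE : ∀ i, DifferentiableOn ℂ (fun t => Efld t i) U)
    (hEuler : ∀ X Y : (Fin 2 → ℂ) → (Fin 2 → ℂ),
        (∀ i, DifferentiableOn ℂ (fun t => X t i) U) →
        (∀ i, DifferentiableOn ℂ (fun t => Y t i) U) →
        ∀ t ∈ U,
          vbracket Efld (vmulN2 X Y) t - vmulN2 (vbracket Efld X) Y t
            - vmulN2 X (vbracket Efld Y) t = vmulN2 X Y t) :
    ∃ c₁ : ℂ, ∃ g : ℂ → ℂ, AnalyticAt ℂ g 0 ∧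
      ∀ᶠ t in nhds (0 : Fin 2 → ℂ), Efld t 0 = t 0 + c₁ ∧ Efld t 1 = g (t 1) := by
  have hEF : IsEulerFieldN2 U Efld := hEuler
  obtain ⟨r, hr, hball⟩ := isOpen_iff.mp hU 0 h0
  have hEr : ∀ i, DifferentiableOn ℂ (fun t => Efld t i) (ball 0 r) := fun i => (hE i).mono hball
  refine ⟨Efld 0 0, fun z => Efld (Pi.single 1 z) 1, ?_,
    Filter.eventually_of_mem (ball_mem_nhds 0 hr) fun t ht => ⟨?_, ?_⟩⟩
  · refine DifferentiableOn.analyticAt (s := ball 0 r) ?_ (ball_mem_nhds 0 hr)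
    refine (hEr 1).comp (fun z _ => (hasDerivAt_single 1 z).differentiableAt.differentiableWithinAt)
      fun z hz => ?_
    simpa [Pi.norm_single] using hz
  · have hfst := hEF.fst_sub_apply_eq (hEr 0) hball ht
    simp only [Pi.zero_apply, sub_zero] at hfst
    linear_combination hfst
  · have hsingle : update t 0 0 = Pi.single 1 (t 1) := by
      ext j; fin_cases j <;> simp
    show Efld t 1 = Efld (Pi.single 1 (t 1)) 1
    rw [← hsingle]
    exact (apply_update_eq_of_fderiv_single_eq_zero (hEr 1) 0
      (fun x hx => by simpa using hEF.fderiv_unit (hball hx) 1) ht).symm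

/-- Any Euler field on the germ `N₂`, i.e., any holomorphic vector field `E` on a connected
open neighbourhood `U` of `0` in `ℂ²` with `Lie_E(∘) = ∘`, has the form
`E = (t₁ + c₁)∂₁ + g(t₂)∂₂` for some `c₁ ∈ ℂ` and some `g ∈ ℂ{t₂}`. -/
theorem statement11 (U : Set (Fin 2 → ℂ)) (hU : IsOpen U) (hUc : IsPreconnected U)
    (h0 : (0 : Fin 2 → ℂ) ∈ U)
    (Efld : (Fin 2 → ℂ) → (Fin 2 → ℂ))
    (hE : ∀ i, DifferentiableOn ℂ (fun t => Efld t i) U)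
    (hEuler : ∀ X Y : (Fin 2 → ℂ) → (Fin 2 → ℂ),
        (∀ i, DifferentiableOn ℂ (fun t => X t i) U) →
        (∀ i, DifferentiableOn ℂ (fun t => Y t i) U) →
        ∀ t ∈ U,
          vbracket Efld (vmulN2 X Y) t - vmulN2 (vbracket Efld X) Y t
            - vmulN2 X (vbracket Efld Y) t = vmulN2 X Y t) :
    ∃ c₁ : ℂ, ∃ g : ℂ → ℂ, AnalyticAt ℂ g 0 ∧
      ∀ᶠ t in nhds (0 : Fin 2 → ℂ), Efld t 0 = t 0 + c₁ ∧ Efld t 1 = g (t 1) :=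
  statement11_general U hU h0 Efld hE hEuler
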